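/- arXiv:1201.6432 — 4 statements merged into one kernel-verified Lean document; each statement's English description precedes it below -/
import Mathlib

section
/- For all positive real numbers a, b with a ≠ b, the strict inequality (4/π − 1)·C(a,b) + (1 − (4/π − 1))·A(a,b) < T(a,b) holds. -/
open Real

/-- The Seiffert mean of two positive reals. -/
noncomputable def seiffertT (a b : ℝ) : ℝ := (a - b) / (2 * Real.arctan ((a - b) / (a + b)))

/-- The arithmetic mean of two positive reals. -/
noncomputable def arithMean (a b : ℝ) : ℝ := (a + b) / 2

/-- The contra-harmonic mean of two positive reals. -/
noncomputable def contraharmonicMean (a b : ℝ) : ℝ := (a ^ 2 + b ^ 2) / (a + b)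

/-!
With `s = a + b` and `t = (a - b) / (a + b) ∈ (0, 1)` (for `b < a`), one has `A = s / 2`,
`C = s (1 + t²) / 2` and `T = s t / (2 arctan t)`, so with `c = 4/π - 1` the inequality reads
`(1 + c t²) arctan t < t`, i.e. `0 < f t` with `f t = t / (1 + c t²) - arctan t`.
Now `f 0 = 0`, and `f 1 = 1 / (1 + c) - π / 4 = 0` by the choice of `c`, while `f'` has the sign of
`(1 - 3c) - c (1 + c) t²`, so `f` increases and then decreases on `[0, ∞)`: it is positive
between its two zeros.
-/

theorem lt_apply_of_strictMonoOn_of_strictAntiOn {α β : Type*} [LinearOrder α] [Preorder β]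
    {f : α → β} {a m b t : α} {y : β} (hmono : StrictMonoOn f (Set.Icc a m))
    (hanti : StrictAntiOn f (Set.Ici m)) (ha : f a = y) (hb : f b = y) (ht : t ∈ Set.Ioo a b) :
    y < f t := by
  rcases le_or_gt t m with htm | hmt
  · exact ha ▸ hmono ⟨le_rfl, ht.1.le.trans htm⟩ ⟨ht.1.le, htm⟩ ht.1
  · exact hb ▸ hanti hmt.le (hmt.trans ht.2).le ht.2

noncomputable def arctanDefect (c t : ℝ) : ℝ := t / (1 + c * t ^ 2) - arctan t

theorem hasDerivAt_arctanDefect {c : ℝ} (hc : 0 ≤ c) (x : ℝ) :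
    HasDerivAt (arctanDefect c)
      (x ^ 2 * ((1 - 3 * c) - c * (1 + c) * x ^ 2) / ((1 + c * x ^ 2) ^ 2 * (1 + x ^ 2))) x := by
  have hden : 1 + c * x ^ 2 ≠ 0 := by positivity
  have hquot : HasDerivAt (fun t ↦ t / (1 + c * t ^ 2))
      ((1 * (1 + c * x ^ 2) - x * (c * (2 * x))) / (1 + c * x ^ 2) ^ 2) x :=
    (hasDerivAt_id x).div (by simpa using ((hasDerivAt_pow 2 x).const_mul c).const_add 1) hden
  have : 1 + x ^ 2 ≠ 0 := by positivity
  exact (hquot.sub (hasDerivAt_arctan x)).congr_deriv (by field_simp; ring)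

theorem continuous_arctanDefect {c : ℝ} (hc : 0 ≤ c) : Continuous (arctanDefect c) :=
  continuous_iff_continuousAt.2 fun x ↦ (hasDerivAt_arctanDefect hc x).continuousAt

theorem strictMonoOn_arctanDefect {c : ℝ} (hc : 0 < c) :
    StrictMonoOn (arctanDefect c) (Set.Icc 0 √((1 - 3 * c) / (c * (1 + c)))) := by
  refine strictMonoOn_of_hasDerivWithinAt_pos (convex_Icc _ _)
    (continuous_arctanDefect hc.le).continuousOn
    (fun x _ ↦ (hasDerivAt_arctanDefect hc.le x).hasDerivWithinAt) ?_
  intro x hx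
  obtain ⟨hx0, hx⟩ := interior_Icc (a := (0 : ℝ)) ▸ hx
  rw [Real.lt_sqrt hx0.le, lt_div_iff₀ (by positivity)] at hx
  have : 0 < (1 - 3 * c) - c * (1 + c) * x ^ 2 := by linarith
  positivity

theorem strictAntiOn_arctanDefect {c : ℝ} (hc : 0 < c) :
    StrictAntiOn (arctanDefect c) (Set.Ici √((1 - 3 * c) / (c * (1 + c)))) := by
  refine strictAntiOn_of_hasDerivWithinAt_neg (convex_Ici _)
    (continuous_arctanDefect hc.le).continuousOn
    (fun x _ ↦ (hasDerivAt_arctanDefect hc.le x).hasDerivWithinAt) ?_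
  intro x hx
  rw [interior_Ici, Set.mem_Ioi] at hx
  have hx0 : 0 < x := (Real.sqrt_nonneg _).trans_lt hx
  rw [Real.sqrt_lt' hx0, div_lt_iff₀ (by positivity)] at hx
  have : (1 - 3 * c) - c * (1 + c) * x ^ 2 < 0 := by linarith
  exact div_neg_of_neg_of_pos (mul_neg_of_pos_of_neg (by positivity) this) (by positivity)

theorem arctanDefect_zero (c : ℝ) : arctanDefect c 0 = 0 := by
  simp [arctanDefect]

theorem arctanDefect_one : arctanDefect (4 / π - 1) 1 = 0 := by
  simp only [arctanDefect, one_pow, mul_one, add_sub_cancel, arctan_one, one_div_div, sub_self]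

theorem four_div_pi_sub_one_pos : 0 < 4 / π - 1 := by
  rw [sub_pos, one_lt_div pi_pos]
  exact pi_lt_four

theorem one_add_mul_sq_mul_arctan_lt {t : ℝ} (ht0 : 0 < t) (ht1 : t < 1) :
    (1 + (4 / π - 1) * t ^ 2) * arctan t < t := by
  have hdefect : 0 < arctanDefect (4 / π - 1) t :=
    lt_apply_of_strictMonoOn_of_strictAntiOn (strictMonoOn_arctanDefect four_div_pi_sub_one_pos)
      (strictAntiOn_arctanDefect four_div_pi_sub_one_pos) (arctanDefect_zero _) arctanDefect_one
      ⟨ht0, ht1⟩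
  have hden : 0 < 1 + (4 / π - 1) * t ^ 2 := by nlinarith [four_div_pi_sub_one_pos]
  rw [arctanDefect, sub_pos, lt_div_iff₀ hden] at hdefect
  linarith

theorem mul_contraharmonicMean_add_mul_arithMean {a b : ℝ} (hab : a + b ≠ 0) (c : ℝ) :
    c * contraharmonicMean a b + (1 - c) * arithMean a b =
      (a + b) / 2 * (1 + c * ((a - b) / (a + b)) ^ 2) := by
  unfold contraharmonicMean arithMean
  field_simp
  ring

theorem seiffertT_eq {a b : ℝ} (hab : a + b ≠ 0) :
    seiffertT a b = (a + b) / 2 * ((a - b) / (a + b) / arctan ((a - b) / (a + b))) := by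
  unfold seiffertT
  field_simp

theorem seiffertT_comm (a b : ℝ) : seiffertT a b = seiffertT b a := by
  rw [seiffertT, seiffertT, ← neg_sub b a, add_comm a b, neg_div (b + a) (b - a), arctan_neg,
    mul_neg, neg_div_neg_eq]

theorem contraharmonicMean_comm (a b : ℝ) : contraharmonicMean a b = contraharmonicMean b a := by
  rw [contraharmonicMean, contraharmonicMean, add_comm a, add_comm (a ^ 2)]

theorem arithMean_comm (a b : ℝ) : arithMean a b = arithMean b a := by
  rw [arithMean, arithMean, add_comm]

theorem stmt_5 (a b : ℝ) (ha : 0 < a) (hb : 0 < b) (hab : a ≠ b) :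
    (4 / π - 1) * contraharmonicMean a b + (1 - (4 / π - 1)) * arithMean a b < seiffertT a b := by
  wlog hba : b < a generalizing a b
  · rw [contraharmonicMean_comm, arithMean_comm, seiffertT_comm]
    exact this b a hb ha hab.symm (hab.lt_or_gt.resolve_right hba)
  have hsum : 0 < a + b := add_pos ha hb
  set t := (a - b) / (a + b)
  have ht0 : 0 < t := div_pos (sub_pos.2 hba) hsum
  have ht1 : t < 1 := (div_lt_one hsum).2 (by linarith)
  rw [mul_contraharmonicMean_add_mul_arithMean hsum.ne', seiffertT_eq hsum.ne']
  gcongr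
  rw [lt_div_iff₀ (arctan_pos.2 ht0)]
  exact one_add_mul_sq_mul_arctan_lt ht0 ht1
end

section
/- For every real number α₁ > 4/π − 1, there exist positive real numbers a, b with a ≠ b such that α₁·C(a,b) + (1−α₁)·A(a,b) ≥ T(a,b); that is, 4/π − 1 is the greatest constant α₁ for which α₁·C(a,b) + (1−α₁)·A(a,b) < T(a,b) holds for all a ≠ b. -/
open Real Filter Topology

/-!
Let `b → 0⁺` with `a = 1`. All three means are continuous there, with limits
`C(1,0) = 1`, `A(1,0) = 1/2` and `T(1,0) = 1/(2 arctan 1) = 2/π`, so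
`α₁ C + (1 - α₁) A - T` tends to `(1 + α₁)/2 - 2/π`, which is positive exactly when
`α₁ > 4/π - 1`. Hence the inequality holds for `(1, b)` with `b > 0` small enough.
-/

lemma continuousAt_arithMean (a b : ℝ) : ContinuousAt (arithMean a) b := by
  unfold arithMean
  fun_prop

lemma continuousAt_contraharmonicMean {a b : ℝ} (hab : a + b ≠ 0) :
    ContinuousAt (contraharmonicMean a) b := by
  unfold contraharmonicMean
  fun_prop (disch := exact hab)

lemma continuousAt_seiffertT {a b : ℝ} (hab : a + b ≠ 0) (hne : a ≠ b) :
    ContinuousAt (seiffertT a) b := by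
  have harctan : 2 * arctan ((a - b) / (a + b)) ≠ 0 := by
    simpa [arctan_eq_zero_iff, sub_eq_zero, hab] using hne
  unfold seiffertT
  exact ContinuousAt.div (by fun_prop)
    (continuousAt_const.mul (continuous_arctan.continuousAt.comp (by fun_prop (disch := exact hab))))
    harctan

lemma seiffertT_one_zero : seiffertT 1 0 = 2 / π := by
  rw [seiffertT]
  norm_num [arctan_one]
  ring

theorem stmt_7 (α₁ : ℝ) (hα₁ : 4 / π - 1 < α₁) :
    ∃ a b : ℝ, 0 < a ∧ 0 < b ∧ a ≠ b ∧
      α₁ * contraharmonicMean a b + (1 - α₁) * arithMean a b ≥ seiffertT a b := by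
  set gap : ℝ → ℝ := fun b =>
    α₁ * contraharmonicMean 1 b + (1 - α₁) * arithMean 1 b - seiffertT 1 b with hgap
  have hcont : ContinuousAt gap 0 :=
    ((continuousAt_const.mul (continuousAt_contraharmonicMean (by norm_num))).add
      (continuousAt_const.mul (continuousAt_arithMean 1 0))).sub
      (continuousAt_seiffertT (by norm_num) one_ne_zero)
  have hpos : 0 < gap 0 := by
    have : 4 / π = 2 * (2 / π) := by ring
    simp only [hgap, seiffertT_one_zero, contraharmonicMean, arithMean]
    norm_num
    linarith
  obtain ⟨b, hb_gap, hb_pos, hb_lt⟩ :=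
    ((hcont.eventually (lt_mem_nhds hpos)).filter_mono nhdsWithin_le_nhds |>.and
      (Ioo_mem_nhdsGT one_pos)).exists
  exact ⟨1, b, one_pos, hb_pos, hb_lt.ne', by linarith⟩
end

section
/- For every real number β₁ < 1/3, there exist positive real numbers a, b with a ≠ b such that T(a,b) ≥ β₁·C(a,b) + (1−β₁)·A(a,b); that is, 1/3 is the least constant β₁ for which T(a,b) < β₁·C(a,b) + (1−β₁)·A(a,b) holds for all a ≠ b. -/
/-!
Take `a = 1 + x`, `b = 1 - x`. Then `T = x / arctan x`, `A = 1` and `C = 1 + x²`, so the claim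
reads `x / arctan x ≥ 1 + β₁ x²`. Since `x / arctan x = 1 + x²/3 + O(x⁴)`, this holds for small
`x` as soon as `β₁ < 1/3`; quantitatively, `arctan x ≤ x (1 - c x²)` with `c = 1/3 - x²/5`, and
`1 / (1 - c x²) ≥ 1 + c x²`.
-/

open Real

lemma seiffertT_one_add_one_sub (x : ℝ) : seiffertT (1 + x) (1 - x) = x / arctan x := by
  rw [seiffertT, show (1 + x - (1 - x)) / (1 + x + (1 - x)) = x by ring]
  ring

lemma arithMean_one_add_one_sub (x : ℝ) : arithMean (1 + x) (1 - x) = 1 := by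
  rw [arithMean]; ring

lemma contraharmonicMean_one_add_one_sub (x : ℝ) :
    contraharmonicMean (1 + x) (1 - x) = 1 + x ^ 2 := by
  rw [contraharmonicMean]; ring

lemma arctan_le_taylor_of_nonneg {x : ℝ} (hx : 0 ≤ x) : arctan x ≤ x - x ^ 3 / 3 + x ^ 5 / 5 := by
  let f : ℝ → ℝ := fun t ↦ t - t ^ 3 / 3 + t ^ 5 / 5 - arctan t
  have hf : ∀ y, HasDerivAt f (y ^ 6 / (1 + y ^ 2)) y := by
    intro y
    have : (1 : ℝ) + y ^ 2 ≠ 0 := by positivity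
    refine ((((hasDerivAt_id y).sub ((hasDerivAt_pow 3 y).div_const 3)).add
      ((hasDerivAt_pow 5 y).div_const 5)).sub (hasDerivAt_arctan y)).congr_deriv ?_
    field_simp
    ring
  have hmono : Monotone f :=
    monotone_of_deriv_nonneg (fun y ↦ (hf y).differentiableAt)
      (fun y ↦ (hf y).deriv ▸ by positivity)
  have := hmono hx
  simp only [f, arctan_zero] at this
  linarith

lemma one_add_mul_sq_le_div_arctan {x β : ℝ} (hx : 0 < x) (hβ : β ≤ 1 / 3 - x ^ 2 / 5) :
    1 + β * x ^ 2 ≤ x / arctan x := by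
  set c := 1 / 3 - x ^ 2 / 5 with hc
  have hp : 0 < 1 - c * x ^ 2 := by rw [hc]; nlinarith [sq_nonneg (x ^ 2 - 5 / 6)]
  have harctan : arctan x ≤ x * (1 - c * x ^ 2) := by
    rw [hc]; linarith [arctan_le_taylor_of_nonneg hx.le]
  have hpos : 0 < arctan x := arctan_pos.mpr hx
  calc 1 + β * x ^ 2 ≤ 1 + c * x ^ 2 := by gcongr
    _ ≤ 1 / (1 - c * x ^ 2) := by
        rw [le_div_iff₀ hp]; nlinarith [sq_nonneg (c * x ^ 2)]
    _ = x / (x * (1 - c * x ^ 2)) := by field_simp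
    _ ≤ x / arctan x := by gcongr

theorem stmt_8 (β₁ : ℝ) (hβ₁ : β₁ < 1 / 3) :
    ∃ a b : ℝ, 0 < a ∧ 0 < b ∧ a ≠ b ∧
      seiffertT a b ≥ β₁ * contraharmonicMean a b + (1 - β₁) * arithMean a b := by
  set x := min (1 / 2) (1 / 3 - β₁)
  have hx : 0 < x := lt_min (by norm_num) (by linarith)
  have hx_half : x ≤ 1 / 2 := min_le_left _ _
  have hxβ : x ≤ 1 / 3 - β₁ := min_le_right _ _
  refine ⟨1 + x, 1 - x, by linarith, by linarith, by linarith, ?_⟩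
  rw [seiffertT_one_add_one_sub, contraharmonicMean_one_add_one_sub, arithMean_one_add_one_sub]
  have := one_add_mul_sq_le_div_arctan (β := β₁) hx (by nlinarith)
  linarith
end

section
/- For all positive real numbers a, b with a ≠ b, the quantity (T(a,b) − A(a,b))/(C(a,b) − A(a,b)) lies strictly between 4/π − 1 and 1/3. -/
open Real

/-!
With `x = (a - b) / (a + b)` one has `T - A = A (x / arctan x - 1)` and `C - A = A x²`, so the ratio
is `(x - arctan x) / (x² arctan x)`, an even function of `x` with `0 < |x| < 1`. Both bounds then
amount to the rational bounds `3x / (3 + x²) < arctan x < πx / (π + (4 - π) x²)` on `(0, 1)`.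
The left difference vanishes at `0` and has derivative `4x⁴ / ((1 + x²)(3 + x²)²) > 0`. The right
difference vanishes at `0` and at `1`, and its derivative has the sign of `π(π - 3) - (4 - π) x²`,
so it first increases and then decreases, hence is positive in between.
-/

open Set

lemma strictMonoOn_of_hasDerivAt_pos {D : Set ℝ} (hD : Convex ℝ D) {f f' : ℝ → ℝ}
    (hf : ∀ x, HasDerivAt f (f' x) x) (hf' : ∀ x ∈ interior D, 0 < f' x) : StrictMonoOn f D :=
  strictMonoOn_of_hasDerivWithinAt_pos hD (fun x _ ↦ (hf x).continuousAt.continuousWithinAt)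
    (fun x _ ↦ (hf x).hasDerivWithinAt) hf'

lemma strictAntiOn_of_hasDerivAt_neg {D : Set ℝ} (hD : Convex ℝ D) {f f' : ℝ → ℝ}
    (hf : ∀ x, HasDerivAt f (f' x) x) (hf' : ∀ x ∈ interior D, f' x < 0) : StrictAntiOn f D :=
  strictAntiOn_of_hasDerivWithinAt_neg hD (fun x _ ↦ (hf x).continuousAt.continuousWithinAt)
    (fun x _ ↦ (hf x).hasDerivWithinAt) hf'

lemma pos_of_strictMonoOn_of_strictAntiOn {f : ℝ → ℝ} {a b c x : ℝ}
    (hmono : StrictMonoOn f (Icc a c)) (hanti : StrictAntiOn f (Icc c b))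
    (ha : f a = 0) (hb : f b = 0) (hx : x ∈ Ioo a b) : 0 < f x := by
  rcases le_or_gt x c with hxc | hcx
  · simpa [ha] using hmono ⟨le_rfl, hx.1.le.trans hxc⟩ ⟨hx.1.le, hxc⟩ hx.1
  · simpa [hb] using hanti ⟨hcx.le, hx.2.le⟩ ⟨hcx.le.trans hx.2.le, le_rfl⟩ hx.2

lemma hasDerivAt_arctan_sub_three_mul_div (y : ℝ) :
    HasDerivAt (fun y ↦ arctan y - 3 * y / (3 + y ^ 2))
      (4 * y ^ 4 / ((1 + y ^ 2) * (3 + y ^ 2) ^ 2)) y := by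
  refine ((hasDerivAt_arctan y).sub (((hasDerivAt_id y).const_mul 3).div
    ((hasDerivAt_pow 2 y).const_add 3) (by positivity))).congr_deriv ?_
  simp only [id, Nat.cast_ofNat]
  field_simp
  ring

lemma three_mul_div_lt_arctan {x : ℝ} (hx : 0 < x) : 3 * x / (3 + x ^ 2) < arctan x := by
  have hmono := strictMonoOn_of_hasDerivAt_pos (convex_Ici 0)
    hasDerivAt_arctan_sub_three_mul_div fun y hy ↦ by
      rw [interior_Ici, mem_Ioi] at hy
      positivity
  simpa using hmono self_mem_Ici hx.le hx

lemma hasDerivAt_pi_mul_div_sub_arctan (y : ℝ) :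
    HasDerivAt (fun y ↦ π * y / (π + (4 - π) * y ^ 2) - arctan y)
      (4 * y ^ 2 * (π * (π - 3) - (4 - π) * y ^ 2) /
        ((1 + y ^ 2) * (π + (4 - π) * y ^ 2) ^ 2)) y := by
  have hD : π + (4 - π) * y ^ 2 ≠ 0 := by
    have := sub_pos.2 pi_lt_four
    positivity
  refine ((((hasDerivAt_id y).const_mul π).div
    (((hasDerivAt_pow 2 y).const_mul (4 - π)).const_add π) hD).sub
    (hasDerivAt_arctan y)).congr_deriv ?_
  simp only [id, Nat.cast_ofNat]
  field_simp
  ring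

lemma arctan_lt_pi_mul_div {x : ℝ} (h0 : 0 < x) (h1 : x < 1) :
    arctan x < π * x / (π + (4 - π) * x ^ 2) := by
  set c := √(π * (π - 3) / (4 - π))
  have h4π : 0 < 4 - π := sub_pos.2 pi_lt_four
  have hc : c ^ 2 = π * (π - 3) / (4 - π) :=
    sq_sqrt (div_nonneg (mul_nonneg pi_pos.le (sub_nonneg.2 pi_gt_three.le)) h4π.le)
  have hmono := strictMonoOn_of_hasDerivAt_pos (convex_Icc 0 c)
    hasDerivAt_pi_mul_div_sub_arctan fun y hy ↦ by
      rw [interior_Icc] at hy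
      have : (4 - π) * y ^ 2 < π * (π - 3) := by
        rw [← lt_div_iff₀' h4π, ← hc]
        exact pow_lt_pow_left₀ hy.2 hy.1.le two_ne_zero
      have : 0 < y := hy.1
      exact div_pos (mul_pos (by positivity) (by linarith)) (by positivity)
  have hanti := strictAntiOn_of_hasDerivAt_neg (convex_Icc c 1)
    hasDerivAt_pi_mul_div_sub_arctan fun y hy ↦ by
      rw [interior_Icc] at hy
      have : π * (π - 3) < (4 - π) * y ^ 2 := by
        rw [← div_lt_iff₀' h4π, ← hc]
        exact pow_lt_pow_left₀ hy.1 (sqrt_nonneg _) two_ne_zero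
      have : 0 < y := (sqrt_nonneg _).trans_lt hy.1
      exact div_neg_of_neg_of_pos (mul_neg_of_pos_of_neg (by positivity) (by linarith))
        (by positivity)
  have := pos_of_strictMonoOn_of_strictAntiOn hmono hanti (by simp)
    (by rw [arctan_one]; field_simp; ring) ⟨h0, h1⟩
  simpa using this

noncomputable def arctanRatio (x : ℝ) : ℝ := (x - arctan x) / (x ^ 2 * arctan x)

lemma arctanRatio_neg (x : ℝ) : arctanRatio (-x) = arctanRatio x := by
  rw [arctanRatio, arctanRatio, arctan_neg]
  ring

lemma arctanRatio_abs (x : ℝ) : arctanRatio |x| = arctanRatio x := by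
  rcases abs_choice x with h | h <;> rw [h]
  exact arctanRatio_neg x

lemma arctanRatio_mem_Ioo {x : ℝ} (h0 : 0 < x) (h1 : x < 1) :
    arctanRatio x ∈ Ioo (4 / π - 1) (1 / 3) := by
  have ht : 0 < arctan x := arctan_pos.2 h0
  have hden : 0 < x ^ 2 * arctan x := by positivity
  rw [arctanRatio, mem_Ioo, lt_div_iff₀ hden, div_lt_iff₀ hden]
  constructor
  · have := arctan_lt_pi_mul_div h0 h1
    rw [lt_div_iff₀ (by have := sub_pos.2 pi_lt_four; positivity)] at this
    rw [sub_mul, div_mul_eq_mul_div, div_sub' pi_ne_zero, div_lt_iff₀ pi_pos]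
    linarith
  · have := three_mul_div_lt_arctan h0
    rw [div_lt_iff₀ (by positivity)] at this
    linarith

lemma contraharmonicMean_sub_arithMean {a b : ℝ} (hs : a + b ≠ 0) :
    contraharmonicMean a b - arithMean a b = (a - b) ^ 2 / (2 * (a + b)) := by
  rw [contraharmonicMean, arithMean]
  field_simp
  ring

lemma seiffert_ratio_eq_arctanRatio {a b : ℝ} (hs : a + b ≠ 0) (hab : a ≠ b) :
    (seiffertT a b - arithMean a b) / (contraharmonicMean a b - arithMean a b)
      = arctanRatio ((a - b) / (a + b)) := by
  have hd : a - b ≠ 0 := sub_ne_zero.2 hab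
  have ht : arctan ((a - b) / (a + b)) ≠ 0 := by
    rw [Ne, arctan_eq_zero_iff]; exact div_ne_zero hd hs
  rw [contraharmonicMean_sub_arithMean hs, seiffertT, arithMean, arctanRatio]
  field_simp

theorem stmt_17 (a b : ℝ) (ha : 0 < a) (hb : 0 < b) (hab : a ≠ b) :
    4 / π - 1 < (seiffertT a b - arithMean a b) / (contraharmonicMean a b - arithMean a b) ∧
      (seiffertT a b - arithMean a b) / (contraharmonicMean a b - arithMean a b) < 1 / 3 := by
  have hs : 0 < a + b := add_pos ha hb
  have h0 : 0 < |(a - b) / (a + b)| := abs_pos.2 (div_ne_zero (sub_ne_zero.2 hab) hs.ne')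
  have h1 : |(a - b) / (a + b)| < 1 := by
    rw [abs_div, abs_of_pos hs, div_lt_one hs, abs_sub_lt_iff]
    constructor <;> linarith
  rw [seiffert_ratio_eq_arctanRatio hs.ne' hab, ← arctanRatio_abs]
  exact arctanRatio_mem_Ioo h0 h1
end
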